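/- Let λ* < ∞ be the largest λ such that G_λ (all edges parameterized) has no negative-cost cycle, and let π be the shortest path potential for G_{λ*}. Then in G^π every edge has cost at least λ*, and there exists a cycle C all of whose edges have cost exactly λ* in G^π; hence C is a minimum mean cycle of G and the minimum cycle mean of G equals λ*. -/

import Mathlib

variable {V : Type*}

/-- `IsWalkFrom E s t p` : `p` is a list of edges forming a walk from `s` to `t`
in the directed graph with edge relation `E`. -/
def IsWalkFrom (E : V → V → Prop) : V → V → List (V × V) → Prop
  | s, t, [] => s = t
  | s, t, e :: p => E e.1 e.2 ∧ e.1 = s ∧ IsWalkFrom E e.2 t p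

/-- Total cost of a walk. -/
def walkCost (c : V × V → ℝ) (p : List (V × V)) : ℝ := (p.map c).sum

/-- The graph has a negative-cost (directed) cycle. -/
def HasNegCycle (E : V → V → Prop) (c : V × V → ℝ) : Prop :=
  ∃ v p, p ≠ [] ∧ IsWalkFrom E v v p ∧ walkCost c p < 0

/-- `v` is reachable from `s`. -/
def Reaches (E : V → V → Prop) (s v : V) : Prop := ∃ p, IsWalkFrom E s v p

/-- Edge costs of `G_lam`: the parameter `lam` is subtracted from the cost of each
parameterized edge (edges in `E'`). -/
def paramCost (c : V × V → ℝ) (E' : V × V → Prop) [DecidablePred E'] (lam : ℝ) :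
    V × V → ℝ :=
  fun e => c e - lam * (if E' e then 1 else 0)

/-- Number of parameterized edges on a walk. -/
def paramCount (E' : V × V → Prop) [DecidablePred E'] (p : List (V × V)) : ℕ :=
  p.countP fun e => decide (E' e)

/-- `t` is a shortest path tree from `s`: it assigns to each vertex a walk from `s`
of minimum cost. -/
def IsSPTree (E : V → V → Prop) (c : V × V → ℝ) (s : V) (t : V → List (V × V)) : Prop :=
  ∀ v, IsWalkFrom E s v (t v) ∧ ∀ q, IsWalkFrom E s v q → walkCost c (t v) ≤ walkCost c q

/-!
Shortest distances satisfy the triangle inequality along every edge, which says exactly that all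
edges of `G^π` cost at least `λ*`; since potentials do not change cycle costs, every cycle of `G`
then has mean at least `λ*`. For the tight cycle: if every cycle of `G` had an edge of `G^π`
costing more than `λ*`, such an edge would cost at least `λ* + δ` for a uniform `δ > 0`
(finitely many edges), so every simple cycle would have mean at least `λ* + δ / (|V| + 1)`.
Every negative cycle contains a negative simple one, so `G_μ` would have no negative cycle for
`μ = λ* + δ / (|V| + 1)`, contradicting the maximality of `λ*`.
-/

theorem exists_pos_le_of_finite {α : Type*} [Finite α] {d : α → ℝ} (P : α → Prop)
    (hd : ∀ a, P a → 0 < d a) : ∃ δ > 0, ∀ a, P a → δ ≤ d a := by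
  rcases {a | P a}.eq_empty_or_nonempty with hempty | hne
  · exact ⟨1, one_pos, fun a ha => absurd ha (Set.eq_empty_iff_forall_notMem.1 hempty a)⟩
  · obtain ⟨a₀, ha₀, hmin⟩ := Set.exists_min_image _ d (Set.toFinite _) hne
    exact ⟨d a₀, hd a₀ ha₀, hmin⟩

/-- The edge costs of `G^π`. -/
def reducedCost (c : V × V → ℝ) (π : V → ℝ) : V × V → ℝ := fun e => c e + π e.1 - π e.2

section Walks

variable {E : V → V → Prop} {c : V × V → ℝ} {s t u v : V} {p q : List (V × V)}

theorem isWalkFrom_append_iff :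
    IsWalkFrom E s t (p ++ q) ↔ ∃ m, IsWalkFrom E s m p ∧ IsWalkFrom E m t q := by
  induction p generalizing s with
  | nil => simp [IsWalkFrom]
  | cons e p ih => simp [IsWalkFrom, ih, and_assoc]

theorem IsWalkFrom.adj {e : V × V} (hp : IsWalkFrom E s t p) (he : e ∈ p) : E e.1 e.2 := by
  induction p generalizing s with
  | nil => simp at he
  | cons f p ih =>
    obtain ⟨hf, -, hp⟩ := hp
    rcases List.mem_cons.1 he with rfl | he
    exacts [hf, ih hp he]

theorem walkCost_append : walkCost c (p ++ q) = walkCost c p + walkCost c q := by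
  simp [walkCost]

theorem walkCost_sub_const (μ : ℝ) :
    walkCost (fun e => c e - μ) p = walkCost c p - μ * p.length := by
  induction p with
  | nil => simp [walkCost]
  | cons e p ih =>
    simp only [walkCost, List.map_cons, List.sum_cons, List.length_cons] at ih ⊢
    rw [ih]; push_cast; ring

theorem mul_length_le_walkCost {b : ℝ} (h : ∀ e ∈ p, b ≤ c e) :
    b * p.length ≤ walkCost c p := by
  simpa [walkCost, mul_comm] using List.card_nsmul_le_sum (p.map c) b (List.forall_mem_map.2 h)

theorem walkCost_eq_mul_length {b : ℝ} (h : ∀ e ∈ p, c e = b) : walkCost c p = b * p.length := by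
  simpa [walkCost, mul_comm] using List.sum_eq_card_nsmul (p.map c) b (List.forall_mem_map.2 h)

theorem IsWalkFrom.walkCost_reducedCost (π : V → ℝ) (hp : IsWalkFrom E s t p) :
    walkCost (reducedCost c π) p = walkCost c p + π s - π t := by
  induction p generalizing s with
  | nil => obtain rfl : s = t := hp; simp [walkCost]
  | cons e p ih =>
    obtain ⟨-, rfl, hp⟩ := hp
    have := ih hp
    simp only [walkCost, reducedCost, List.map_cons, List.sum_cons] at this ⊢
    rw [this]; ring

theorem IsWalkFrom.walkCost_reducedCost_of_closed (π : V → ℝ) (hp : IsWalkFrom E v v p) :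
    walkCost (reducedCost c π) p = walkCost c p := by
  rw [hp.walkCost_reducedCost]; ring

theorem hasNegCycle_reducedCost_iff (π : V → ℝ) :
    HasNegCycle E (reducedCost c π) ↔ HasNegCycle E c := by
  simp only [HasNegCycle]
  constructor <;> rintro ⟨v, p, hne, hp, hneg⟩ <;>
    exact ⟨v, p, hne, hp, by simpa only [hp.walkCost_reducedCost_of_closed π] using hneg⟩

theorem IsWalkFrom.exists_cycle_of_not_nodup (hp : IsWalkFrom E u v p)
    (hnd : ¬ (p.map Prod.fst).Nodup) :
    ∃ w p₁ q p₂, p = p₁ ++ q ++ p₂ ∧ q ≠ [] ∧ p₂ ≠ [] ∧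
      IsWalkFrom E u w p₁ ∧ IsWalkFrom E w w q ∧ IsWalkFrom E w v p₂ := by
  induction p generalizing u with
  | nil => simp at hnd
  | cons e p ih =>
    obtain ⟨he, rfl, hp⟩ := hp
    rw [List.map_cons, List.nodup_cons, not_and_or, not_not] at hnd
    rcases hnd with hmem | hnd
    · obtain ⟨f, hf, hfe⟩ := List.mem_map.1 hmem
      obtain ⟨a, b, rfl⟩ := List.append_of_mem hf
      obtain ⟨m, ha, hfb⟩ := isWalkFrom_append_iff.1 hp
      obtain rfl : f.1 = m := hfb.2.1
      rw [hfe] at ha hfb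
      exact ⟨e.1, [], e :: a, f :: b, by simp, by simp, by simp, rfl, ⟨he, rfl, ha⟩, hfb⟩
    · obtain ⟨w, p₁, q, p₂, rfl, hq, hp₂, h₁, hqw, h₂⟩ := ih hp hnd
      exact ⟨w, e :: p₁, q, p₂, rfl, hq, hp₂, ⟨he, rfl, h₁⟩, hqw, h₂⟩

theorem HasNegCycle.exists_nodup (h : HasNegCycle E c) :
    ∃ v p, p ≠ [] ∧ (p.map Prod.fst).Nodup ∧ IsWalkFrom E v v p ∧ walkCost c p < 0 := by
  obtain ⟨v, p, hne, hp, hneg⟩ := h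
  induction hn : p.length using Nat.strong_induction_on generalizing v p with
  | _ n ih =>
  by_cases hnd : (p.map Prod.fst).Nodup
  · exact ⟨v, p, hne, hnd, hp, hneg⟩
  obtain ⟨w, p₁, q, p₂, rfl, hq, hp₂, h₁, hqw, h₂⟩ := hp.exists_cycle_of_not_nodup hnd
  have hq₀ := List.length_pos_iff.2 hq
  have hp₂₀ := List.length_pos_iff.2 hp₂
  simp only [List.length_append] at hn
  simp only [walkCost_append] at hneg
  rcases lt_or_ge (walkCost c q) 0 with hqneg | hqnonneg
  · exact ih q.length (by omega) w q hq hqw hqneg rfl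
  · refine ih (p₁ ++ p₂).length (by rw [List.length_append]; omega) v (p₁ ++ p₂) (by simp [hp₂])
      (isWalkFrom_append_iff.2 ⟨w, h₁, h₂⟩) ?_ rfl
    rw [walkCost_append]; linarith

theorem le_add_of_shortest {s u v : V} {w : V × V → ℝ} {π : V → ℝ}
    (hu : ∃ p, IsWalkFrom E s u p ∧ walkCost w p = π u)
    (hv : ∀ p, IsWalkFrom E s v p → π v ≤ walkCost w p) (huv : E u v) :
    π v ≤ π u + w (u, v) := by
  obtain ⟨p, hp, hpπ⟩ := hu
  rw [← hpπ]
  simpa [walkCost_append, walkCost] using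
    hv (p ++ [(u, v)]) (isWalkFrom_append_iff.2 ⟨u, hp, huv, rfl, rfl⟩)

theorem exists_cycle_forall_eq_zero [Fintype V] (d : V × V → ℝ)
    (hd : ∀ u v, E u v → 0 ≤ d (u, v)) (hneg : ∀ ε > 0, HasNegCycle E (fun e => d e - ε)) :
    ∃ u K, K ≠ [] ∧ IsWalkFrom E u u K ∧ ∀ e ∈ K, d e = 0 := by
  by_contra! hnone
  obtain ⟨δ, hδ, hδle⟩ := exists_pos_le_of_finite (d := d) (fun e => E e.1 e.2 ∧ d e ≠ 0)
    fun e he => (hd _ _ he.1).lt_of_ne' he.2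
  set n := Fintype.card V
  obtain ⟨v, p, hne, hnd, hp, hpneg⟩ := (hneg (δ / (n + 1)) (by positivity)).exists_nodup
  obtain ⟨e, he, hde⟩ := hnone v p hne hp
  have hcost : δ ≤ walkCost d p :=
    (hδle e ⟨hp.adj he, hde⟩).trans <| List.single_le_sum
      (List.forall_mem_map.2 fun f hf => hd _ _ (hp.adj hf)) _ (List.mem_map_of_mem he)
  have hlen : (p.length : ℝ) ≤ n := by exact_mod_cast by simpa using hnd.length_le_card
  have hshift : δ / (n + 1) * p.length ≤ δ := by
    rw [div_mul_eq_mul_div, div_le_iff₀ (by positivity)]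
    nlinarith
  rw [walkCost_sub_const] at hpneg
  linarith

end Walks

theorem stmt10_general [Fintype V] (E : V → V → Prop) (c : V × V → ℝ) (s : V) (lamstar : ℝ)
    (h2 : ∀ μ > lamstar, HasNegCycle E (fun e => c e - μ))
    (π : V → ℝ)
    (hπ : ∀ v, (∃ p, IsWalkFrom E s v p ∧ walkCost (fun e => c e - lamstar) p = π v) ∧
      ∀ p, IsWalkFrom E s v p → π v ≤ walkCost (fun e => c e - lamstar) p) :
    (∀ u v, E u v → lamstar ≤ c (u, v) + π u - π v) ∧
    ∃ u K, K ≠ [] ∧ IsWalkFrom E u u K ∧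
      (∀ e ∈ K, c e + π e.1 - π e.2 = lamstar) ∧
      (∀ w K', K' ≠ [] → IsWalkFrom E w w K' →
        walkCost c K / K.length ≤ walkCost c K' / K'.length) ∧
      walkCost c K / K.length = lamstar := by
  have hle : ∀ u v, E u v → lamstar ≤ reducedCost c π (u, v) := fun u v huv => by
    have := le_add_of_shortest (hπ u).1 (hπ v).2 huv
    simp only [reducedCost]
    linarith
  obtain ⟨u, K, hK, hKw, hKtight⟩ :=
    exists_cycle_forall_eq_zero (fun e => reducedCost c π e - lamstar)
      (fun u v huv => sub_nonneg.2 (hle u v huv)) fun ε hε => by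
        convert (hasNegCycle_reducedCost_iff π).2 (h2 (lamstar + ε) (by linarith)) using 3
        simp only [reducedCost]
        ring
  have htight (e) (he : e ∈ K) : reducedCost c π e = lamstar := sub_eq_zero.1 (hKtight e he)
  have hmean : walkCost c K / K.length = lamstar := by
    rw [← hKw.walkCost_reducedCost_of_closed π, walkCost_eq_mul_length htight,
      mul_div_cancel_right₀ _ (by simpa using hK)]
  refine ⟨hle, u, K, hK, hKw, htight, fun w K' hK' hK'w => ?_, hmean⟩
  rw [hmean, le_div_iff₀ (by simpa [List.length_pos_iff] using hK'),
    ← hK'w.walkCost_reducedCost_of_closed π]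
  exact mul_length_le_walkCost fun e he => hle _ _ (hK'w.adj he)

/-- Let `lam* < ∞` be the largest `lam` such that `G_lam` (all edges
parameterized) has no negative-cost cycle, and let `π` be the shortest path
potential for `G_{lam*}`. Then every edge of `G^π` has cost at least `lam*`, and
there is a cycle `C` all of whose edges have cost exactly `lam*` in `G^π`; `C` is a
minimum mean cycle of `G` and the minimum cycle mean of `G` equals `lam*`. -/
theorem stmt10 [Fintype V] (E : V → V → Prop) (c : V × V → ℝ) (s : V) (lamstar : ℝ)
    (hcyc : ∃ u K, K ≠ [] ∧ IsWalkFrom E u u K)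
    (hreach : ∀ v, Reaches E s v)
    (h1 : ¬ HasNegCycle E (fun e => c e - lamstar))
    (h2 : ∀ μ > lamstar, HasNegCycle E (fun e => c e - μ))
    (π : V → ℝ)
    (hπ : ∀ v, (∃ p, IsWalkFrom E s v p ∧ walkCost (fun e => c e - lamstar) p = π v) ∧
      ∀ p, IsWalkFrom E s v p → π v ≤ walkCost (fun e => c e - lamstar) p) :
    (∀ u v, E u v → lamstar ≤ c (u, v) + π u - π v) ∧
    ∃ u K, K ≠ [] ∧ IsWalkFrom E u u K ∧
      (∀ e ∈ K, c e + π e.1 - π e.2 = lamstar) ∧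
      (∀ w K', K' ≠ [] → IsWalkFrom E w w K' →
        walkCost c K / K.length ≤ walkCost c K' / K'.length) ∧
      walkCost c K / K.length = lamstar :=
  stmt10_general E c s lamstar h2 π hπ
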